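/- arXiv:1903.09963 — 5 statements merged into one kernel-verified Lean document; each statement's English description precedes it below -/
import Mathlib

section
/- Let n ≥ 3 and let A be a primitive (0,1) companion matrix of order n with positive trace (i.e., a_{n,n} = 1). Then exp(A) = n + m(V_1), where V_1 = {i ∈ [1,n] : a_{n,i} = 0} and m(V_1) is the length of the longest run of consecutive integers contained in V_1 (with m(∅) = 0). -/
open Matrix BigOperators

/-- A nonnegative square matrix is primitive if some positive power has all entries positive. -/
def IsPrimitive {n : ℕ} (A : Matrix (Fin n) (Fin n) ℝ) : Prop :=
  ∃ m : ℕ, 0 < m ∧ ∀ i j, 0 < (A ^ m) i j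

/-- The exponent of a primitive matrix: the least positive `m` with `A ^ m > 0`. -/
noncomputable def matExp {n : ℕ} (A : Matrix (Fin n) (Fin n) ℝ) : ℕ :=
  sInf {m : ℕ | 0 < m ∧ ∀ i j, 0 < (A ^ m) i j}

/-- `(0,1)` companion matrix: superdiagonal ones on the first `n-1` rows,
arbitrary `(0,1)` last row, all other entries zero. -/
def IsCompanion {n : ℕ} (A : Matrix (Fin n) (Fin n) ℝ) : Prop :=
  (∀ i j, A i j = 0 ∨ A i j = 1) ∧
  (∀ i j : Fin n, (i : ℕ) + 1 < n → (A i j = 1 ↔ (j : ℕ) = (i : ℕ) + 1))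

/-- `exp(A:i,j)`: least positive `k` such that `(A^l) i j > 0` for all `l ≥ k`. -/
noncomputable def expIJ {n : ℕ} (A : Matrix (Fin n) (Fin n) ℝ) (i j : Fin n) : ℕ :=
  sInf {k : ℕ | 0 < k ∧ ∀ l, k ≤ l → 0 < (A ^ l) i j}

/-- `exp(A:i)`: least positive `p` such that every entry of row `i` of `A ^ p` is positive. -/
noncomputable def expRow {n : ℕ} (A : Matrix (Fin n) (Fin n) ℝ) (i : Fin n) : ℕ :=
  sInf {p : ℕ | 0 < p ∧ ∀ j, 0 < (A ^ p) i j}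

/-- The digraph of `A` has an elementary cycle of length `k`. -/
def HasElemCycle {n : ℕ} (A : Matrix (Fin n) (Fin n) ℝ) (k : ℕ) : Prop :=
  0 < k ∧ ∃ c : ℕ → Fin n, c k = c 0 ∧
    (∀ i j, i < k → j < k → c i = c j → i = j) ∧
    ∀ i < k, A (c i) (c (i + 1)) = 1

/-- `m(U)`: the maximal length of a run of consecutive integers contained in `U`. -/
noncomputable def runMax (U : Set ℕ) : ℕ :=
  sSup {k : ℕ | ∃ a : ℕ, ∀ t < k, a + t ∈ U}

/-- The Frobenius number of a set `L`: the least `N` such that every `m ≥ N` is a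
nonnegative integer combination of elements of `L`. -/
noncomputable def frobNum (L : Set ℕ) : ℕ :=
  sInf {N : ℕ | ∀ m, N ≤ m → m ∈ AddSubmonoid.closure L}

/-- Irreducibility: for all `i j` there is a walk of some positive length from `i` to `j`. -/
def IsIrreducibleMat {n : ℕ} (A : Matrix (Fin n) (Fin n) ℝ) : Prop :=
  ∀ i j, ∃ k : ℕ, 0 < k ∧ 0 < (A ^ k) i j

/-!
In the digraph of a companion matrix every vertex `i < n` has the single arc `i → i + 1`, while
`n` carries a loop and an arc to each `j₀` with `a_{n,j₀} = 1`. So a walk of length `l` from `i` to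
`j` exists iff `j = i + l` or `l ≥ (n - i) + 1 + (j - j₀)` for such a `j₀ ≤ j`: walk up to `n`,
wait on the loop, jump to `j₀`, walk up to `j`. Since `a_{n,1} = 1`, the best `j₀` is at distance
at most `m(V₁)` below `j`, and the distance `m(V₁)` is attained at the end of a longest run of
zeros; the worst start is `i = 1`. Hence `exp(A) = n + m(V₁)`.
-/

theorem Matrix.pow_succ_apply_pos_iff {ι R : Type*} [Fintype ι] [DecidableEq ι] [Ring R]
    [LinearOrder R] [IsStrictOrderedRing R] {A : Matrix ι ι R} (hA : ∀ i j, 0 ≤ A i j)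
    (l : ℕ) (i j : ι) : 0 < (A ^ (l + 1)) i j ↔ ∃ k, 0 < A i k ∧ 0 < (A ^ l) k j := by
  have hterm (k : ι) : 0 ≤ A i k * (A ^ l) k j := mul_nonneg (hA i k) (pow_apply_nonneg hA l k j)
  rw [pow_succ', mul_apply, Finset.sum_pos_iff_of_nonneg fun k _ => hterm k]
  simp only [Finset.mem_univ, true_and]
  exact exists_congr fun k => ⟨fun h => ⟨pos_of_mul_pos_left h (pow_apply_nonneg hA l k j),
    pos_of_mul_pos_right h (hA i k)⟩, fun h => mul_pos h.1 h.2⟩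

section runMax

variable {V : Set ℕ}

theorem bddAbove_runLengths (hV : BddAbove V) : BddAbove {k | ∃ a, ∀ t < k, a + t ∈ V} := by
  obtain ⟨b, hb⟩ := hV
  refine ⟨b + 1, fun k ⟨a, ha⟩ => ?_⟩
  rcases Nat.eq_zero_or_pos k with rfl | hk
  · omega
  · have := hb (ha (k - 1) (by omega))
    omega

theorem le_runMax (hV : BddAbove V) {a k : ℕ} (hrun : ∀ t < k, a + t ∈ V) : k ≤ runMax V :=
  le_csSup (bddAbove_runLengths hV) ⟨a, hrun⟩

theorem exists_run_runMax (hV : BddAbove V) : ∃ a, ∀ t < runMax V, a + t ∈ V :=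
  Nat.sSup_mem (s := {k | ∃ a, ∀ t < k, a + t ∈ V}) ⟨0, 0, by simp⟩ (bddAbove_runLengths hV)

/-- If `S ∪ V` covers `[0, j]` and `0 ∈ S`, the largest element `j₀ ≤ j` of `S` is followed by a
run `(j₀, j]` inside `V`. -/
theorem exists_mem_le_sub_le_runMax {S : Set ℕ} (hV : BddAbove V) (h0 : 0 ∈ S) {j : ℕ}
    (hcover : ∀ i ≤ j, i ∈ S ∨ i ∈ V) : ∃ j₀ ∈ S, j₀ ≤ j ∧ j - j₀ ≤ runMax V := by
  by_contra! hfar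
  have hj : runMax V < j := by simpa using hfar 0 h0 (Nat.zero_le j)
  have hrun : ∀ t < runMax V + 1, j - runMax V + t ∈ V := fun t ht =>
    (hcover _ (by omega)).resolve_left fun hS => by
      have := hfar (j - runMax V + t) hS (by omega)
      omega
  have := le_runMax hV hrun
  omega

theorem lt_of_mem_of_run {S : Set ℕ} (hSV : Disjoint S V) {a k j₀ : ℕ}
    (hrun : ∀ t < k, a + t ∈ V) (hj₀ : j₀ ∈ S) (hlt : j₀ < a + k) : j₀ < a := by
  by_contra! hge
  have := hrun (j₀ - a) (by omega)
  rw [Nat.add_sub_cancel' hge] at this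
  exact hSV.notMem_of_mem_left hj₀ this

end runMax

/-- For the last row `r` this is the paper's `V₁`, with indices shifted to start at `0`. -/
def rowZeros {n : ℕ} (A : Matrix (Fin n) (Fin n) ℝ) (r : Fin n) : Set ℕ :=
  {m | ∃ i : Fin n, (i : ℕ) = m ∧ A r i = 0}

def rowOnes {n : ℕ} (A : Matrix (Fin n) (Fin n) ℝ) (r : Fin n) : Set ℕ :=
  {m | ∃ i : Fin n, (i : ℕ) = m ∧ A r i = 1}

theorem bddAbove_rowZeros {n : ℕ} (A : Matrix (Fin n) (Fin n) ℝ) (r : Fin n) :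
    BddAbove (rowZeros A r) :=
  ⟨n, by rintro _ ⟨i, rfl, -⟩; exact i.isLt.le⟩

theorem disjoint_rowOnes_rowZeros {n : ℕ} (A : Matrix (Fin n) (Fin n) ℝ) (r : Fin n) :
    Disjoint (rowOnes A r) (rowZeros A r) := by
  rw [Set.disjoint_left]
  rintro _ ⟨i, rfl, hi⟩ ⟨i', hi', hi'₀⟩
  rw [Fin.ext hi'] at hi'₀
  simp [hi] at hi'₀

namespace IsCompanion

variable {n : ℕ} {A : Matrix (Fin n) (Fin n) ℝ} {r : Fin n}

theorem nonneg (hA : IsCompanion A) (i j : Fin n) : 0 ≤ A i j := by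
  rcases hA.1 i j with h | h <;> simp [h]

theorem pos_iff_eq_one (hA : IsCompanion A) {i j : Fin n} : 0 < A i j ↔ A i j = 1 := by
  rcases hA.1 i j with h | h <;> simp [h]

theorem exists_pos_and_iff (hA : IsCompanion A) {i : Fin n} (hi : (i : ℕ) + 1 < n)
    {P : Fin n → Prop} :
    (∃ k, 0 < A i k ∧ P k) ↔ P ⟨i + 1, hi⟩ := by
  simp only [hA.pos_iff_eq_one, hA.2 i _ hi]
  constructor
  · rintro ⟨k, hk, hP⟩
    rwa [show k = ⟨i + 1, hi⟩ from Fin.ext hk] at hP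
  · exact fun hP => ⟨_, rfl, hP⟩

/-- A walk of length `l` from `i` to `j` either runs straight along the superdiagonal, or goes to
the last vertex `r`, waits on its loop, jumps to some `j₀ ≤ j` and runs on to `j`. -/
theorem pow_apply_pos_iff (hA : IsCompanion A) (hr : (r : ℕ) + 1 = n)
    (htr : A r r = 1) (l : ℕ) (i j : Fin n) :
    0 < (A ^ l) i j ↔
      (j : ℕ) = i + l ∨ ∃ j₀ ∈ rowOnes A r, j₀ ≤ j ∧ n - i + (j - j₀) ≤ l := by
  induction l generalizing i with
  | zero =>
    rw [pow_zero, one_apply]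
    split_ifs with hij
    · simp [hij]
    · simp only [lt_self_iff_false, false_iff, not_or, not_exists, not_and]
      exact ⟨fun h => hij (Fin.ext h.symm), fun _ _ _ => by omega⟩
  | succ l ih =>
    rw [pow_succ_apply_pos_iff hA.nonneg]
    by_cases hi : (i : ℕ) + 1 < n
    · rw [hA.exists_pos_and_iff hi, ih]
      refine or_congr (by simp only; omega) (exists_congr fun j₀ => and_congr_right fun _ => ?_)
      simp only
      omega
    obtain rfl : i = r := Fin.ext (by omega)
    simp only [hA.pos_iff_eq_one, ih]
    constructor
    · rintro ⟨k, hk, hj | ⟨j₀, hj₀, hle, hl⟩⟩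
      · exact Or.inr ⟨k, ⟨k, rfl, hk⟩, by omega, by omega⟩
      · exact Or.inr ⟨j₀, hj₀, hle, by omega⟩
    · rintro (hj | ⟨_, ⟨j₀, rfl, hj₀⟩, hle, hl⟩)
      · omega
      rcases (by omega : (j : ℕ) - j₀ = l ∨ (j : ℕ) - j₀ < l) with heq | hlt
      · exact ⟨j₀, hj₀, Or.inl (by omega)⟩
      · exact ⟨i, htr, Or.inr ⟨j₀, ⟨j₀, rfl, hj₀⟩, hle, by omega⟩⟩

theorem pow_add_runMax_apply_pos (hA : IsCompanion A) (hr : (r : ℕ) + 1 = n) (htr : A r r = 1)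
    (h0 : 0 ∈ rowOnes A r) (i j : Fin n) : 0 < (A ^ (n + runMax (rowZeros A r))) i j := by
  have hcover : ∀ m ≤ (j : ℕ), m ∈ rowOnes A r ∨ m ∈ rowZeros A r := fun m hm =>
    (hA.1 r ⟨m, by omega⟩).symm.imp (⟨_, rfl, ·⟩) (⟨_, rfl, ·⟩)
  obtain ⟨j₀, hj₀, hle, hsub⟩ := exists_mem_le_sub_le_runMax (bddAbove_rowZeros A r) h0 hcover
  exact (hA.pow_apply_pos_iff hr htr _ i j).mpr (Or.inr ⟨j₀, hj₀, hle, by omega⟩)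

/-- The entry `(0, j)` with `j` closing a longest run of zeros in the last row is the last one
to become positive. -/
theorem add_runMax_le (hA : IsCompanion A) (hr : (r : ℕ) + 1 = n) (htr : A r r = 1)
    {m : ℕ} (hm0 : 0 < m) (hm : ∀ i j, 0 < (A ^ m) i j) : n + runMax (rowZeros A r) ≤ m := by
  have hpos := hA.pow_apply_pos_iff hr htr m
  have hn : n ≤ m := by
    rcases (hpos ⟨0, by omega⟩ ⟨0, by omega⟩).mp (hm _ _) with h | ⟨j₀, -, hle, hl⟩
    · simp only at h
      omega
    · simp only at hle hl
      omega
  obtain ⟨a, hrun⟩ := exists_run_runMax (bddAbove_rowZeros A r)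
  rcases Nat.eq_zero_or_pos (runMax (rowZeros A r)) with hM | hM
  · omega
  obtain ⟨j, hj, -⟩ := hrun (runMax (rowZeros A r) - 1) (by omega)
  rcases (hpos ⟨0, by omega⟩ j).mp (hm _ _) with h | ⟨j₀, hj₀, hle, hl⟩
  · simp only at h
    omega
  · have := lt_of_mem_of_run (disjoint_rowOnes_rowZeros A r) hrun hj₀ (by omega)
    simp only at hl
    omega

end IsCompanion

theorem stmt4 {n : ℕ} (hn : 3 ≤ n) (A : Matrix (Fin n) (Fin n) ℝ)
    (hA : IsCompanion A)
    (h1 : A ⟨n - 1, by omega⟩ ⟨0, by omega⟩ = 1)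
    (htr : A ⟨n - 1, by omega⟩ ⟨n - 1, by omega⟩ = 1) :
    matExp A =
      n + runMax {m : ℕ | ∃ i : Fin n, (i : ℕ) = m ∧ A ⟨n - 1, by omega⟩ i = 0} := by
  have hr : ((⟨n - 1, by omega⟩ : Fin n) : ℕ) + 1 = n := by simp only; omega
  exact IsLeast.csInf_eq ⟨⟨by omega, hA.pow_add_runMax_apply_pos hr htr ⟨_, rfl, h1⟩⟩,
    fun m ⟨hm0, hm⟩ => hA.add_runMax_le hr htr hm0 hm⟩
end

section
/- Let n ≥ 3 and let A be a primitive (0,1) companion matrix of order n whose adjacency digraph D(A) contains exactly two elementary cycles, of lengths n and s (so gcd(n,s) = 1, s < n). Then exp(A) = n + s(n-2). -/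
open Matrix BigOperators

/-!
Vertex `n - 1` is the only vertex of `D(A)` with a choice of successor; as the only elementary
cycles have lengths `n` and `s`, its successors are exactly `0` and `n - s`. So a walk from `i` to
`j` of length `m` winds `a` times around the `n`-cycle and `b` times around the `s`-cycle,
`m + i = j + a n + b s`, with `j ≥ n - s` when `a = 0 < b`; primitivity then forces
`gcd(n, s) = 1`.

For `M = n + s (n - 2)` take `a = u + 1` with `u < s` and `u n ≡ i - j (mod s)`: this is a walk
of length `M` unless `u n + j > s (n - 2) + i`, which forces `u = s - 1` and `j = i + n - s`, and
then `a = 0`, `b = n - 1` works. A walk from `0` to `n - s - 1` of length `M - 1` would give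
`a n + (b + 1) s = n s` with `a ≥ 1`, impossible for coprime `n` and `s`.
-/

namespace Matrix

variable {ι R : Type*} [Fintype ι] [DecidableEq ι] [Semiring R] [LinearOrder R]
  [IsStrictOrderedRing R] {A : Matrix ι ι R}

theorem pow_succ_apply_pos_iff_s8 (hA : ∀ i j, 0 ≤ A i j) (m : ℕ) (i j : ι) :
    0 < (A ^ (m + 1)) i j ↔ ∃ k, 0 < A i k ∧ 0 < (A ^ m) k j := by
  rw [pow_succ', mul_apply, Finset.sum_pos_iff_of_nonneg
    fun k _ => mul_nonneg (hA i k) (pow_apply_nonneg hA m k j)]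
  simp only [Finset.mem_univ, true_and]
  refine exists_congr fun k => ⟨fun h => ⟨?_, ?_⟩, fun h => mul_pos h.1 h.2⟩
  · exact (hA i k).lt_of_ne fun h' => by simp [← h'] at h
  · exact (pow_apply_nonneg hA m k j).lt_of_ne fun h' => by simp [← h'] at h

theorem pow_apply_pos_of_le (hA : ∀ i j, 0 ≤ A i j) (hrow : ∀ i, ∃ k, 0 < A i k)
    {m m' : ℕ} (hm : m ≤ m') (h : ∀ i j, 0 < (A ^ m) i j) : ∀ i j, 0 < (A ^ m') i j := by
  induction m', hm using Nat.le_induction with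
  | base => exact h
  | succ m' _ ih =>
    intro i j
    obtain ⟨k, hk⟩ := hrow i
    exact (pow_succ_apply_pos_iff_s8 hA m' i j).2 ⟨k, hk, ih k j⟩

end Matrix

/-- The edges of `D(A)` in the theorem, with vertices `0, …, n-1`:
`i → i+1`, `n-1 → 0` and `n-1 → n-s`. -/
def TwoCycleEdge (n s i k : ℕ) : Prop :=
  (i + 1 < n ∧ k = i + 1) ∨ (i + 1 = n ∧ (k = 0 ∨ k + s = n))

/-- Lengths `m` of walks from `i` to `j` along `TwoCycleEdge n s`: such a walk winds `a` times
around the `n`-cycle and `b` times around the `s`-cycle, and if it never uses the edge `n-1 → 0`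
but uses `n-1 → n-s`, it ends on the `s`-cycle. -/
def IsWalkLength (n s i j m : ℕ) : Prop :=
  ∃ a b, m + i = j + a * n + b * s ∧ (a = 0 → b = 0 ∨ n ≤ j + s)

section WalkLength

variable {n s : ℕ}

lemma isWalkLength_zero_iff {i j : ℕ} (hi : i < n) : IsWalkLength n s i j 0 ↔ i = j := by
  constructor
  · rintro ⟨_ | a, _ | b, h, hab⟩
    · omega
    · rcases hab rfl with hb | hb
      · omega
      · nlinarith
    · nlinarith
    · nlinarith
  · rintro rfl
    exact ⟨0, 0, by simp, fun _ => Or.inl rfl⟩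

lemma isWalkLength_succ_iff_start_succ {i j m : ℕ} :
    IsWalkLength n s i j (m + 1) ↔ IsWalkLength n s (i + 1) j m := by
  simp only [IsWalkLength, Nat.add_right_comm m 1 i, add_assoc]

lemma isWalkLength_last_succ_iff {j m : ℕ} (hsn : s < n) (hj : j < n) :
    IsWalkLength n s (n - 1) j (m + 1) ↔
      IsWalkLength n s 0 j m ∨ IsWalkLength n s (n - s) j m := by
  have hm : m + 1 + (n - 1) = m + n := by omega
  have hns : n - s + s = n := by omega
  simp only [IsWalkLength, hm, add_zero]
  constructor
  · rintro ⟨_ | a, _ | b, h, hab⟩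
    · omega
    · refine Or.inr ⟨0, b, by linarith [hns], fun _ => Or.inr ?_⟩
      simpa using hab rfl
    · exact Or.inl ⟨a, 0, by linarith [hns], fun _ => Or.inl rfl⟩
    · exact Or.inr ⟨a + 1, b, by linarith [hns], fun h => absurd h (Nat.succ_ne_zero a)⟩
  · rintro (⟨a, b, h, -⟩ | ⟨a, b, h, hab⟩)
    · exact ⟨a + 1, b, by linarith [hns], fun h => absurd h (Nat.succ_ne_zero a)⟩
    · refine ⟨a, b + 1, by linarith [hns], fun ha => Or.inr ?_⟩
      rcases hab ha with rfl | hb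
      · subst ha
        simp only [zero_mul, add_zero] at h
        omega
      · omega

lemma isWalkLength_succ_iff {i j m : ℕ} (hs : 0 < s) (hsn : s < n) (hi : i < n) (hj : j < n) :
    IsWalkLength n s i j (m + 1) ↔
      ∃ k < n, TwoCycleEdge n s i k ∧ IsWalkLength n s k j m := by
  unfold TwoCycleEdge
  rcases Nat.lt_or_ge (i + 1) n with hi' | hi'
  · rw [isWalkLength_succ_iff_start_succ]
    constructor
    · exact fun h => ⟨i + 1, hi', Or.inl ⟨hi', rfl⟩, h⟩
    · rintro ⟨k, -, (⟨-, rfl⟩ | ⟨h, -⟩), hk⟩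
      · exact hk
      · omega
  · obtain rfl : i = n - 1 := by omega
    rw [isWalkLength_last_succ_iff hsn hj]
    constructor
    · rintro (h | h)
      · exact ⟨0, by omega, Or.inr ⟨by omega, Or.inl rfl⟩, h⟩
      · exact ⟨n - s, by omega, Or.inr ⟨by omega, Or.inr (by omega)⟩, h⟩
    · rintro ⟨k, -, (⟨h, -⟩ | ⟨-, rfl | hk⟩), hw⟩
      · omega
      · exact Or.inl hw
      · obtain rfl : k = n - s := by omega
        exact Or.inr hw

lemma IsWalkLength.modEq_gcd {i j m : ℕ} (h : IsWalkLength n s i j m) :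
    m + i ≡ j [MOD n.gcd s] := by
  obtain ⟨a, b, h, -⟩ := h
  have : a * n + b * s ≡ 0 [MOD n.gcd s] := Nat.modEq_zero_iff_dvd.mpr <|
    dvd_add (dvd_mul_of_dvd_right (Nat.gcd_dvd_left n s) a)
      (dvd_mul_of_dvd_right (Nat.gcd_dvd_right n s) b)
  rw [h, add_assoc]
  simpa using this.add_left j

lemma coprime_of_isWalkLength {m : ℕ} (h0 : IsWalkLength n s 0 0 m)
    (h1 : IsWalkLength n s 0 1 m) : n.Coprime s :=
  Nat.dvd_one.mp <| Nat.modEq_zero_iff_dvd.mp <| h1.modEq_gcd.symm.trans h0.modEq_gcd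

lemma isWalkLength_exponent {i j : ℕ} (hs : 0 < s) (hsn : s < n) (hco : n.Coprime s)
    (hi : i < n) (hj : j < n) : IsWalkLength n s i j (n + s * (n - 2)) := by
  obtain ⟨u, hu, hmod⟩ : ∃ u < s, u * n + j ≡ s * (n - 2) + i [MOD s] := by
    have : NeZero s := ⟨hs.ne'⟩
    refine ⟨((i - j : ZMod s) * (n : ZMod s)⁻¹).val, ZMod.val_lt _, ?_⟩
    rw [← ZMod.natCast_eq_natCast_iff]
    push_cast
    rw [ZMod.natCast_zmod_val, ZMod.natCast_self, zero_mul, zero_add, mul_assoc,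
      mul_comm _ (n : ZMod s), ZMod.coe_mul_inv_eq_one n hco, mul_one, sub_add_cancel]
  obtain ⟨k, rfl⟩ : ∃ k, n = k + 2 := ⟨n - 2, by omega⟩
  rw [Nat.add_sub_cancel] at hmod ⊢
  rcases le_or_gt (u * (k + 2) + j) (s * k + i) with hle | hlt
  · obtain ⟨b, hb⟩ := (Nat.modEq_iff_dvd' hle).mp hmod
    exact ⟨u + 1, b, by nlinarith [Nat.sub_add_cancel hle], fun h => absurd h u.succ_ne_zero⟩
  · obtain ⟨q, hq⟩ := (Nat.modEq_iff_dvd' hlt.le).mp hmod.symm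
    replace hq : u * (k + 2) + j = s * k + i + s * q := by omega
    obtain rfl : q = 1 := by
      have hq0 : 0 < q := Nat.pos_of_mul_pos_left (by nlinarith : 0 < s * q)
      have hq2 : q < 2 := Nat.lt_of_mul_lt_mul_left (by nlinarith : s * q < s * 2)
      omega
    obtain rfl : u + 1 = s := by
      by_contra hne
      nlinarith [Nat.mul_le_mul_right (k + 2) (show u + 2 ≤ s by omega)]
    exact ⟨0, k + 1, by nlinarith, fun _ => Or.inr (by nlinarith)⟩

lemma not_isWalkLength_exponent_pred (hs : 0 < s) (hsn : s < n) (hco : n.Coprime s) :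
    ¬ IsWalkLength n s 0 (n - s - 1) (n + s * (n - 2) - 1) := by
  obtain ⟨k, rfl⟩ : ∃ k, n = k + 2 := ⟨n - 2, by omega⟩
  rw [Nat.add_sub_cancel]
  rintro ⟨_ | a, b, h, hab⟩
  · rcases hab rfl with rfl | hb <;> omega
  · refine hco.mul_add_mul_ne_mul (a := a + 1) (b := b + 1) (by omega) (by omega) ?_
    have : s * k + s = (a + 1) * (k + 2) + b * s := by omega
    linarith

lemma exists_twoCycleEdge {i : ℕ} (hi : i < n) : ∃ k < n, TwoCycleEdge n s i k := by
  rcases Nat.lt_or_ge (i + 1) n with h | h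
  · exact ⟨i + 1, h, Or.inl ⟨h, rfl⟩⟩
  · exact ⟨0, by omega, Or.inr ⟨by omega, Or.inl rfl⟩⟩

end WalkLength

section Companion

variable {n : ℕ} {A : Matrix (Fin n) (Fin n) ℝ}

lemma IsCompanion.pos_iff (hA : IsCompanion A) (i j : Fin n) : 0 < A i j ↔ A i j = 1 := by
  rcases hA.1 i j with h | h <;> simp [h]

lemma IsCompanion.nonneg_s8 (hA : IsCompanion A) (i j : Fin n) : 0 ≤ A i j := by
  rcases hA.1 i j with h | h <;> simp [h]

lemma IsCompanion.val_add_of_forall_ne_last (hA : IsCompanion A) {c : ℕ → Fin n} {a d : ℕ}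
    (hedge : ∀ t < d, A (c (a + t)) (c (a + t + 1)) = 1)
    (hlast : ∀ t < d, (c (a + t) : ℕ) + 1 ≠ n) : (c (a + d) : ℕ) = c a + d := by
  induction d with
  | zero => rfl
  | succ d ih =>
    have hlt : (c (a + d) : ℕ) + 1 < n := by
      have := hlast d (by omega)
      have := (c (a + d)).isLt
      omega
    rw [← add_assoc, (hA.2 _ _ hlt).mp (hedge d (by omega)),
      ih (fun t ht => hedge t (by omega)) (fun t ht => hlast t (by omega))]
    ring

lemma HasElemCycle.companion_last_edge (hA : IsCompanion A) {k : ℕ} (hk : HasElemCycle A k)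
    (i j : Fin n) (hi : (i : ℕ) + 1 = n) (hj : (j : ℕ) + k = n) : A i j = 1 := by
  obtain ⟨hk0, c, hck, hinj, hedge⟩ := hk
  obtain ⟨t₀, ht₀, hct₀⟩ : ∃ t₀ < k, (c t₀ : ℕ) + 1 = n := by
    by_contra! h
    have := hA.val_add_of_forall_ne_last (a := 0) (d := k) (by simpa using hedge)
      (by simpa using h)
    rw [zero_add, hck] at this
    omega
  have hlast : ∀ t < k, t ≠ t₀ → (c t : ℕ) + 1 ≠ n := fun t ht htt₀ h =>
    htt₀ (hinj t t₀ ht ht₀ (Fin.ext (by omega)))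
  have hup := hA.val_add_of_forall_ne_last (a := 0) (d := t₀)
    (by simpa using fun t ht => hedge t (by omega))
    (by simpa using fun t ht => hlast t (by omega) (by omega))
  have hdown := hA.val_add_of_forall_ne_last (a := t₀ + 1) (d := k - (t₀ + 1))
    (fun t ht => hedge _ (by omega)) (fun t ht => hlast _ (by omega) (by omega))
  rw [show t₀ + 1 + (k - (t₀ + 1)) = k by omega, hck] at hdown
  obtain rfl : i = c t₀ := Fin.ext (by omega)
  obtain rfl : j = c (t₀ + 1) := Fin.ext (by simp at hup; omega)
  exact hedge t₀ ht₀

lemma hasElemCycle_of_companion_last_edge (hA : IsCompanion A) {i j : Fin n}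
    (hi : (i : ℕ) + 1 = n) (hij : A i j = 1) : HasElemCycle A (n - j) := by
  have hpos : 0 < n - j := by omega
  refine ⟨hpos, fun t => ⟨j + t % (n - j), by have := Nat.mod_lt t hpos; omega⟩, ?_, ?_, ?_⟩
  · simp
  · intro a b ha hb hab
    simpa [Nat.mod_eq_of_lt ha, Nat.mod_eq_of_lt hb] using hab
  · intro t ht
    rcases Nat.lt_or_ge (t + 1) (n - j) with h | h
    · refine (hA.2 _ _ ?_).mpr ?_ <;> simp [Nat.mod_eq_of_lt ht, Nat.mod_eq_of_lt h] <;> omega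
    · have hlast : t + 1 = n - j := by omega
      convert hij using 2 <;> ext
      · simp [Nat.mod_eq_of_lt ht]
        omega
      · simp [hlast]

lemma IsCompanion.pos_iff_twoCycleEdge {s : ℕ} (hA : IsCompanion A) (hsn : s < n)
    (hcn : HasElemCycle A n) (hcs : HasElemCycle A s)
    (honly : ∀ k, HasElemCycle A k → k = n ∨ k = s) (i k : Fin n) :
    0 < A i k ↔ TwoCycleEdge n s i k := by
  rw [hA.pos_iff]
  rcases Nat.lt_or_ge ((i : ℕ) + 1) n with hi | hi
  · rw [hA.2 i k hi]
    unfold TwoCycleEdge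
    omega
  · have hi' : (i : ℕ) + 1 = n := by omega
    constructor
    · intro hik
      have := honly _ (hasElemCycle_of_companion_last_edge hA hi' hik)
      right
      omega
    · rintro (⟨h, -⟩ | ⟨-, hk | hk⟩)
      · omega
      · exact hcn.companion_last_edge hA i k hi' (by omega)
      · exact hcs.companion_last_edge hA i k hi' hk

end Companion

theorem pow_apply_pos_iff_isWalkLength {n s : ℕ} {R : Type*} [Semiring R] [LinearOrder R]
    [IsStrictOrderedRing R] {A : Matrix (Fin n) (Fin n) R} (hs : 0 < s) (hsn : s < n)
    (hA : ∀ i j, 0 ≤ A i j) (hedge : ∀ i k, 0 < A i k ↔ TwoCycleEdge n s i k) (m : ℕ)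
    (i j : Fin n) : 0 < (A ^ m) i j ↔ IsWalkLength n s i j m := by
  induction m generalizing i with
  | zero =>
    rw [isWalkLength_zero_iff i.isLt, pow_zero, Matrix.one_apply, Fin.val_inj]
    split_ifs with h <;> simp [h]
  | succ m ih =>
    rw [Matrix.pow_succ_apply_pos_iff_s8 hA, isWalkLength_succ_iff hs hsn i.isLt j.isLt]
    simp only [hedge, ih, Fin.exists_iff, exists_prop]

theorem stmt8_general {n s : ℕ} (hs : 0 < s) (hsn : s < n)
    (A : Matrix (Fin n) (Fin n) ℝ) (hA : IsCompanion A) (hP : _root_.IsPrimitive A)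
    (hcn : HasElemCycle A n) (hcs : HasElemCycle A s)
    (honly : ∀ k, HasElemCycle A k → k = n ∨ k = s) :
    matExp A = n + s * (n - 2) := by
  have hedge := hA.pos_iff_twoCycleEdge hsn hcn hcs honly
  have hwalk := pow_apply_pos_iff_isWalkLength hs hsn hA.nonneg_s8 hedge
  have hco : n.Coprime s := by
    obtain ⟨m, -, hm⟩ := hP
    exact coprime_of_isWalkLength ((hwalk m ⟨0, by omega⟩ ⟨0, by omega⟩).1 (hm _ _))
      ((hwalk m ⟨0, by omega⟩ ⟨1, by omega⟩).1 (hm _ _))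
  have hrow : ∀ i, ∃ k, 0 < A i k := fun i => by
    obtain ⟨k, hk, hik⟩ := exists_twoCycleEdge (s := s) i.isLt
    exact ⟨⟨k, hk⟩, (hedge _ _).2 hik⟩
  obtain ⟨e, he⟩ : ∃ e, n + s * (n - 2) = e + 1 := ⟨n + s * (n - 2) - 1, by omega⟩
  have hup : ∀ m m', m ≤ m' → (0 < m ∧ ∀ i j, 0 < (A ^ m) i j) →
      0 < m' ∧ ∀ i j, 0 < (A ^ m') i j :=
    fun m m' hm h => ⟨by omega, Matrix.pow_apply_pos_of_le hA.nonneg_s8 hrow hm h.2⟩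
  rw [matExp, he]
  refine (Nat.sInf_upward_closed_eq_succ_iff
    (s := {m | 0 < m ∧ ∀ i j, 0 < (A ^ m) i j}) hup e).2
    ⟨⟨by omega, fun i j => (hwalk _ i j).2 ?_⟩, fun ⟨_, h⟩ => ?_⟩
  · rw [← he]
    exact isWalkLength_exponent hs hsn hco i.isLt j.isLt
  · refine not_isWalkLength_exponent_pred hs hsn hco ?_
    rw [he, Nat.add_sub_cancel]
    exact (hwalk e ⟨0, by omega⟩ ⟨n - s - 1, by omega⟩).1 (h _ _)

theorem stmt8 {n s : ℕ} (hn : 3 ≤ n) (hs : 0 < s) (hsn : s < n)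
    (A : Matrix (Fin n) (Fin n) ℝ) (hA : IsCompanion A) (hP : _root_.IsPrimitive A)
    (hcn : HasElemCycle A n) (hcs : HasElemCycle A s)
    (honly : ∀ k, HasElemCycle A k → k = n ∨ k = s) :
    matExp A = n + s * (n - 2) :=
  stmt8_general hs hsn A hA hP hcn hcs honly
end

section
/- Let a_0 ≥ 2, d ≥ 1, s ≥ 1 with gcd(a_0, d) = 1, and set a_j = a_0 + j·d for j = 0,...,s. Then the Frobenius number satisfies F(a_0, a_1, ..., a_s) = (⌊(a_0-2)/s⌋ + 1)·a_0 + (d-1)(a_0-1). -/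
open Matrix BigOperators

/-!
Every element of the semigroup generated by `a₀, a₀ + d, …, a₀ + s d` has the form `x a₀ + y d`
with `y ≤ s x`. Since `gcd(a₀, d) = 1`, the residue of `m` modulo `a₀` fixes `y` modulo `a₀`, and
the representation with the least `y`, namely `y < a₀`, is the one with the largest `x`, so `m` is
representable iff that `y` is at most `s x`. With `q = ⌊(a₀ - 2)/s⌋` this fails for
`m = q a₀ + (a₀ - 1) d`, because `s q ≤ a₀ - 2`, and holds for all larger `m`, which force
`x ≥ q + 1` and `s (q + 1) ≥ a₀ - 1`.
-/

theorem frobNum_eq_succ_of_notMem {L : Set ℕ} {n : ℕ} (hn : n ∉ AddSubmonoid.closure L)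
    (hgt : ∀ m, n < m → m ∈ AddSubmonoid.closure L) : frobNum L = n + 1 := by
  have hmem : n + 1 ∈ {N : ℕ | ∀ m, N ≤ m → m ∈ AddSubmonoid.closure L} := fun m hm => hgt m hm
  refine le_antisymm (Nat.sInf_le hmem) (le_csInf ⟨_, hmem⟩ fun N hN => ?_)
  by_contra! hlt
  exact hn (hN n (by omega))

theorem mem_closure_arith_iff (a₀ d s m : ℕ) :
    m ∈ AddSubmonoid.closure {a : ℕ | ∃ j ≤ s, a = a₀ + j * d} ↔
      ∃ x y : ℕ, y ≤ s * x ∧ m = x * a₀ + y * d := by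
  constructor
  · intro hm
    induction hm using AddSubmonoid.closure_induction with
    | mem a ha =>
      obtain ⟨j, hj, rfl⟩ := ha
      exact ⟨1, j, by simpa using hj, by ring⟩
    | zero => exact ⟨0, 0, by simp, by simp⟩
    | add _ _ _ _ ih₁ ih₂ =>
      obtain ⟨x₁, y₁, h₁, rfl⟩ := ih₁
      obtain ⟨x₂, y₂, h₂, rfl⟩ := ih₂
      exact ⟨x₁ + x₂, y₁ + y₂, by nlinarith, by ring⟩
  · rintro ⟨x, y, hxy, rfl⟩
    induction x generalizing y with
    | zero => simp_all
    | succ x ih =>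
      -- peel off one generator `a₀ + j d`, taking `j` as large as allowed
      have hsplit : (x + 1) * a₀ + y * d = (x * a₀ + (y - min y s) * d) + (a₀ + min y s * d) := by
        have := Nat.sub_add_cancel (min_le_left y s)
        nlinarith
      rw [hsplit]
      refine AddSubmonoid.add_mem _ (ih _ ?_)
        (AddSubmonoid.subset_closure ⟨min y s, min_le_right _ _, rfl⟩)
      rw [Nat.mul_succ] at hxy
      omega

theorem exists_lt_mul_modEq {a d : ℕ} (h : a.Coprime d) [NeZero a] (m : ℕ) :
    ∃ y < a, y * d ≡ m [MOD a] := by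
  refine ⟨((m : ZMod a) * (d : ZMod a)⁻¹).val, ZMod.val_lt _, ?_⟩
  rw [← ZMod.natCast_eq_natCast_iff]
  push_cast
  rw [ZMod.natCast_zmod_val, mul_assoc, mul_comm _ (d : ZMod a),
    ZMod.coe_mul_inv_eq_one d h.symm, mul_one]

theorem le_of_mul_add_mul_eq_of_lt {a d x y x₀ y₀ : ℕ} (h : a.Coprime d) (hy₀ : y₀ < a)
    (heq : x * a + y * d = x₀ * a + y₀ * d) : y₀ ≤ y ∧ x ≤ x₀ := by
  have hmod : y * d ≡ y₀ * d [MOD a] := by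
    simpa [Nat.ModEq, Nat.add_mod, Nat.mul_mod_left] using congrArg (· % a) heq
  have hy : y % a = y₀ := by
    rw [Nat.ModEq.cancel_right_of_coprime h hmod, Nat.mod_eq_of_lt hy₀]
  have hle : y₀ ≤ y := hy ▸ Nat.mod_le y a
  refine ⟨hle, Nat.le_of_mul_le_mul_right ?_ (show 0 < a by omega)⟩
  nlinarith [Nat.mul_le_mul_right d hle]

section ArithmeticProgression

variable {a₀ d s : ℕ}

theorem notMem_closure_arith (ha : 2 ≤ a₀) (h : a₀.Coprime d) :
    (a₀ - 2) / s * a₀ + (a₀ - 1) * d ∉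
      AddSubmonoid.closure {a : ℕ | ∃ j ≤ s, a = a₀ + j * d} := by
  rw [mem_closure_arith_iff]
  rintro ⟨x, y, hxy, heq⟩
  obtain ⟨hy, hx⟩ := le_of_mul_add_mul_eq_of_lt h (by omega : a₀ - 1 < a₀) heq.symm
  have hsq : s * ((a₀ - 2) / s) ≤ a₀ - 2 := Nat.mul_div_le _ _
  have := Nat.mul_le_mul_left s hx
  omega

theorem mem_closure_arith_of_lt (hs : 1 ≤ s) (h : a₀.Coprime d) [NeZero a₀] {m : ℕ}
    (hm : (a₀ - 2) / s * a₀ + (a₀ - 1) * d < m) :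
    m ∈ AddSubmonoid.closure {a : ℕ | ∃ j ≤ s, a = a₀ + j * d} := by
  obtain ⟨y, hy, hmod⟩ := exists_lt_mul_modEq h m
  have hyd : y * d ≤ (a₀ - 1) * d := Nat.mul_le_mul_right d (by omega)
  obtain ⟨x, hx⟩ : a₀ ∣ m - y * d := (Nat.modEq_iff_dvd' (by omega)).mp hmod
  have hm_eq : m = x * a₀ + y * d := by rw [mul_comm x]; omega
  have hxq : (a₀ - 2) / s + 1 ≤ x := by
    by_contra! hlt
    have := Nat.mul_le_mul_right a₀ (Nat.lt_succ_iff.mp hlt)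
    omega
  have hq : a₀ - 2 < s * ((a₀ - 2) / s + 1) := Nat.lt_mul_div_succ _ hs
  have := Nat.mul_le_mul_left s hxq
  exact (mem_closure_arith_iff a₀ d s m).mpr ⟨x, y, by omega, hm_eq⟩

end ArithmeticProgression

theorem stmt14 (a0 d s : ℕ) (ha : 2 ≤ a0) (hd : 1 ≤ d) (hs : 1 ≤ s)
    (h : Nat.Coprime a0 d) :
    frobNum {a : ℕ | ∃ j ≤ s, a = a0 + j * d} =
      ((a0 - 2) / s + 1) * a0 + (d - 1) * (a0 - 1) := by
  have : NeZero a0 := ⟨by omega⟩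
  rw [frobNum_eq_succ_of_notMem (notMem_closure_arith ha h)
    fun m hm => mem_closure_arith_of_lt hs h hm]
  obtain ⟨a, rfl⟩ : ∃ a, a0 = a + 2 := ⟨a0 - 2, by omega⟩
  obtain ⟨e, rfl⟩ : ∃ e, d = e + 1 := ⟨d - 1, by omega⟩
  simp only [Nat.add_sub_cancel, Nat.add_succ_sub_one]
  ring
end

section
/- Let n ≥ 5 be odd. For every nonnegative integer x with x ≤ (n-3)/2, there exists a primitive (0,1) companion matrix A ∈ CP_n of order n with smallest cycle length ℓ_1 = 2 in D(A) such that exp(A) = 2n - 1 + 2x. Hence 2n-1+2x ∈ E(CP_n). -/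
open Matrix BigOperators

/-- The companion matrix with last-row ones exactly at positions `0`, `2x+1`, `n-2`. -/
def Amat (n x : ℕ) : Matrix (Fin n) (Fin n) ℝ := fun i j =>
  if (j : ℕ) = (i : ℕ) + 1 ∧ (i : ℕ) + 1 < n then 1
  else if (i : ℕ) = n - 1 ∧ ((j : ℕ) = 0 ∨ (j : ℕ) = 2 * x + 1 ∨ (j : ℕ) = n - 2) then 1
  else 0

/-- Walk-decomposition predicate characterizing positivity of `(Amat n x)^l`. -/
def Pred (n x l i j : ℕ) : Prop :=
  (i < j ∧ l = j - i) ∨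
  ∃ k c : ℕ, (k = 0 ∨ k = 2 * x + 1 ∨ k = n - 2) ∧ k ≤ j ∧ (c % 2 = 0 ∨ n ≤ c) ∧
    l = (n - 1 - i) + c + (j - k + 1)

lemma Amat_nonneg (n x : ℕ) (i j : Fin n) : 0 ≤ Amat n x i j := by
  unfold Amat; split_ifs <;> norm_num

lemma Amat_pos_iff (n x : ℕ) (i j : Fin n) :
    0 < Amat n x i j ↔ ((j : ℕ) = (i : ℕ) + 1 ∧ (i : ℕ) + 1 < n) ∨
      ((i : ℕ) = n - 1 ∧ ((j : ℕ) = 0 ∨ (j : ℕ) = 2 * x + 1 ∨ (j : ℕ) = n - 2)) := by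
  unfold Amat
  split_ifs with h1 h2
  · exact iff_of_true one_pos (Or.inl h1)
  · exact iff_of_true one_pos (Or.inr h2)
  · exact iff_of_false (lt_irrefl 0) (by rintro (h | h) <;> [exact h1 h; exact h2 h])

lemma Amat_pow_nonneg (n x : ℕ) : ∀ l (i j : Fin n), 0 ≤ ((Amat n x) ^ l) i j := by
  intro l
  induction l with
  | zero =>
      intro i j
      rw [pow_zero, Matrix.one_apply]
      split_ifs <;> norm_num
  | succ l ih =>
      intro i j
      rw [pow_succ, Matrix.mul_apply]
      exact Finset.sum_nonneg fun t _ => mul_nonneg (ih i t) (Amat_nonneg n x t j)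

lemma Amat_pow_succ_pos_iff (n x : ℕ) (l : ℕ) (i j : Fin n) :
    0 < ((Amat n x) ^ (l + 1)) i j ↔
      ∃ t : Fin n, 0 < ((Amat n x) ^ l) i t ∧ 0 < Amat n x t j := by
  rw [pow_succ, Matrix.mul_apply]
  constructor
  · intro hs
    by_contra hc
    push_neg at hc
    have hz : ∑ t, ((Amat n x) ^ l) i t * Amat n x t j = 0 := by
      refine Finset.sum_eq_zero fun t _ => ?_
      rcases lt_or_ge 0 (((Amat n x) ^ l) i t) with h1 | h1
      · have h2 := hc t h1
        have h3 := Amat_nonneg n x t j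
        have : Amat n x t j = 0 := le_antisymm h2 h3
        rw [this, mul_zero]
      · have : ((Amat n x) ^ l) i t = 0 := le_antisymm h1 (Amat_pow_nonneg n x l i t)
        rw [this, zero_mul]
    rw [hz] at hs
    exact lt_irrefl 0 hs
  · rintro ⟨t, h1, h2⟩
    exact Finset.sum_pos' (fun t _ => mul_nonneg (Amat_pow_nonneg n x l i t) (Amat_nonneg n x t j))
      ⟨t, Finset.mem_univ t, mul_pos h1 h2⟩

lemma key (n x : ℕ) (hn : 5 ≤ n) (h2 : n % 2 = 1) (hx : 2 * x ≤ n - 3) :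
    ∀ l, 1 ≤ l → ∀ i j : Fin n, (0 < ((Amat n x) ^ l) i j ↔ Pred n x l (i : ℕ) (j : ℕ)) := by
  intro l hl
  induction l, hl using Nat.le_induction with
  | base =>
      intro i j
      have hi := i.isLt
      have hj := j.isLt
      rw [pow_one, Amat_pos_iff]
      constructor
      · rintro (⟨ha, hb⟩ | ⟨ha, hb⟩)
        · exact Or.inl (by omega)
        · exact Or.inr ⟨(j : ℕ), 0, by omega, le_refl _, Or.inl rfl, by omega⟩
      · rintro (⟨ha, hb⟩ | ⟨k, c, hk, hkj, hc, heq⟩)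
        · exact Or.inl (by omega)
        · exact Or.inr (by omega)
  | succ l hl ih =>
      intro i j
      have hi := i.isLt
      have hj := j.isLt
      rw [Amat_pow_succ_pos_iff]
      constructor
      · rintro ⟨t, hpt, hat⟩
        have ht := t.isLt
        rw [ih] at hpt
        rw [Amat_pos_iff] at hat
        rcases hat with ⟨hj1, hlt⟩ | ⟨ht1, hjO⟩
        · -- t is the predecessor of j on the path
          rcases hpt with ⟨ha, hb⟩ | ⟨k, c, hk, hkj, hc, heq⟩
          · exact Or.inl (by omega)
          · exact Or.inr ⟨k, c, hk, by omega, hc, by omega⟩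
        · -- t = n - 1
          rw [ht1] at hpt
          rcases hpt with ⟨ha, hb⟩ | ⟨k, c, hk, hkj, hc, heq⟩
          · exact Or.inr ⟨(j : ℕ), 0, hjO, le_refl _, Or.inl rfl, by omega⟩
          · exact Or.inr ⟨(j : ℕ), c + (n - k), hjO, le_refl _, by omega, by omega⟩
      · rintro (⟨ha, hb⟩ | ⟨k, c, hk, hkj, hc, heq⟩)
        · -- direct path, length l+1 = j - i ≥ 2
          refine ⟨⟨(j : ℕ) - 1, by omega⟩, (ih _ _).mpr ?_, ?_⟩
          · exact Or.inl (by simp only [Fin.val_mk]; omega)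
          · rw [Amat_pos_iff]; exact Or.inl (by simp only [Fin.val_mk]; omega)
        · rcases lt_or_eq_of_le hkj with hkj' | hkj'
          · -- k < j : come via predecessor j-1
            refine ⟨⟨(j : ℕ) - 1, by omega⟩, (ih _ _).mpr ?_, ?_⟩
            · exact Or.inr ⟨k, c, hk, by simp only [Fin.val_mk]; omega,
                hc, by simp only [Fin.val_mk]; omega⟩
            · rw [Amat_pos_iff]; exact Or.inl (by simp only [Fin.val_mk]; omega)
          · -- k = j : come via vertex n-1
            refine ⟨⟨n - 1, by omega⟩, (ih _ _).mpr ?_, ?_⟩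
            · -- Pred l i (n-1), with l = (n-1-i) + c
              rcases Nat.eq_zero_or_pos c with hc0 | hc0
              · exact Or.inl (by simp only [Fin.val_mk]; omega)
              · rcases hc with hce | hcn
                · -- c even, c ≥ 2 : peel a 2-cycle (k' = n-2)
                  exact Or.inr ⟨n - 2, c - 2, Or.inr (Or.inr rfl), by simp only [Fin.val_mk]; omega,
                    Or.inl (by omega), by simp only [Fin.val_mk]; omega⟩
                · -- c ≥ n : if c odd peel an n-cycle (k' = 0), if even peel a 2-cycle
                  rcases Nat.eq_zero_or_pos (c % 2) with hce | hco
                  · exact Or.inr ⟨n - 2, c - 2, Or.inr (Or.inr rfl),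
                      by simp only [Fin.val_mk]; omega, Or.inl (by omega),
                      by simp only [Fin.val_mk]; omega⟩
                  · exact Or.inr ⟨0, c - n, Or.inl rfl, by simp only [Fin.val_mk]; omega,
                      Or.inl (by omega), by simp only [Fin.val_mk]; omega⟩
            · rw [Amat_pos_iff]
              refine Or.inr ⟨rfl, ?_⟩
              omega

lemma mem_exp (n x : ℕ) (hn : 5 ≤ n) (h2 : n % 2 = 1) (hx : 2 * x ≤ n - 3) (i j : Fin n) :
    0 < ((Amat n x) ^ (2 * n - 1 + 2 * x)) i j := by
  have hi := i.isLt
  have hj := j.isLt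
  rw [key n x hn h2 hx _ (by omega)]
  refine Or.inr ?_
  rcases Nat.eq_zero_or_pos (((i : ℕ) + (j : ℕ)) % 2) with hp | hp
  · exact ⟨0, n - 1 + 2 * x + (i : ℕ) - (j : ℕ), Or.inl rfl, Nat.zero_le _,
      Or.inl (by omega), by omega⟩
  · rcases le_or_gt (2 * x + 1) (j : ℕ) with hj2 | hj2
    · exact ⟨2 * x + 1, n + 4 * x + (i : ℕ) - (j : ℕ), Or.inr (Or.inl rfl), hj2,
        Or.inl (by omega), by omega⟩
    · exact ⟨0, n - 1 + 2 * x + (i : ℕ) - (j : ℕ), Or.inl rfl, Nat.zero_le _,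
        Or.inr (by omega), by omega⟩

lemma not_exp (n x : ℕ) (hn : 5 ≤ n) (h2 : n % 2 = 1) (hx : 2 * x ≤ n - 3)
    (l : ℕ) (hl : 1 ≤ l) (hlm : l < 2 * n - 1 + 2 * x) :
    ∃ i j : Fin n, ¬ Pred n x l (i : ℕ) (j : ℕ) := by
  refine ⟨⟨0, by omega⟩, ?_⟩
  rcases le_or_gt l (n - 1) with hcase | hcase
  · -- j = 0
    refine ⟨⟨0, by omega⟩, ?_⟩
    simp only [Fin.val_mk]
    rintro (⟨ha, hb⟩ | ⟨k, c, hk, hkj, hc, heq⟩) <;> omega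
  · rcases Nat.eq_zero_or_pos (l % 2) with hpar | hpar
    · -- l even ≥ n : j = 2x
      refine ⟨⟨2 * x, by omega⟩, ?_⟩
      simp only [Fin.val_mk]
      rintro (⟨ha, hb⟩ | ⟨k, c, hk, hkj, hc, heq⟩) <;> omega
    · rcases Nat.eq_zero_or_pos x with hx0 | hx0
      · -- x = 0, l odd ≥ n : j = l - n + 2
        refine ⟨⟨l - n + 2, by omega⟩, ?_⟩
        simp only [Fin.val_mk]
        rintro (⟨ha, hb⟩ | ⟨k, c, hk, hkj, hc, heq⟩) <;> omega
      · -- x ≥ 1, l odd ≥ n : j = 2x - 1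
        refine ⟨⟨2 * x - 1, by omega⟩, ?_⟩
        simp only [Fin.val_mk]
        rintro (⟨ha, hb⟩ | ⟨k, c, hk, hkj, hc, heq⟩) <;> omega

theorem stmt16 {n : ℕ} (hn : 5 ≤ n) (hodd : Odd n) (x : ℕ) (hx : x ≤ (n - 3) / 2) :
    ∃ A : Matrix (Fin n) (Fin n) ℝ, IsCompanion A ∧ _root_.IsPrimitive A ∧
      IsLeast {k : ℕ | HasElemCycle A k} 2 ∧ matExp A = 2 * n - 1 + 2 * x := by
  have h2 : n % 2 = 1 := Nat.odd_iff.mp hodd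
  have hx' : 2 * x ≤ n - 3 := by omega
  refine ⟨Amat n x, ?_, ?_, ?_, ?_⟩
  · -- IsCompanion
    constructor
    · intro i j
      unfold Amat
      split_ifs <;> simp
    · intro i j hlt
      unfold Amat
      split_ifs with ha hb
      · exact iff_of_true rfl ha.1
      · exact absurd hb.1 (by omega)
      · exact iff_of_false (by norm_num) (fun hj => ha ⟨hj, hlt⟩)
  · -- IsPrimitive
    exact ⟨2 * n - 1 + 2 * x, by omega, mem_exp n x hn h2 hx'⟩
  · -- IsLeast cycles 2
    constructor
    · refine ⟨by omega, fun t => if t = 1 then ⟨n - 2, by omega⟩ else ⟨n - 1, by omega⟩,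
        by norm_num, ?_, ?_⟩
      · intro a b ha hb hab
        interval_cases a <;> interval_cases b <;> simp_all [Fin.mk.injEq] <;> omega
      · intro a ha
        interval_cases a
        · show Amat n x ⟨n - 1, by omega⟩ ⟨n - 2, by omega⟩ = 1
          unfold Amat
          split_ifs with hA hB
          · rfl
          · rfl
          · exact absurd ⟨rfl, Or.inr (Or.inr rfl)⟩ hB
        · show Amat n x ⟨n - 2, by omega⟩ ⟨n - 1, by omega⟩ = 1
          unfold Amat
          split_ifs with hA hB
          · rfl
          · rfl
          · exfalso
            simp only [Fin.val_mk] at hA hB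
            omega
    · rintro k ⟨hk0, c, hcyc, hinj, hedge⟩
      by_contra hlt
      push_neg at hlt
      have hk1 : k = 1 := by omega
      subst hk1
      have he := hedge 0 (by omega)
      rw [show (0 + 1 : ℕ) = 1 from rfl, hcyc] at he
      have hc0 := (c 0).isLt
      unfold Amat at he
      split_ifs at he with hA hB
      · omega
      · obtain ⟨hB1, hB2⟩ := hB
        omega
      · norm_num at he
  · -- matExp
    have hm : (2 * n - 1 + 2 * x) ∈ {m : ℕ | 0 < m ∧ ∀ i j, 0 < ((Amat n x) ^ m) i j} :=
      ⟨by omega, mem_exp n x hn h2 hx'⟩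
    have hlb : ∀ m ∈ {m : ℕ | 0 < m ∧ ∀ i j, 0 < ((Amat n x) ^ m) i j},
        2 * n - 1 + 2 * x ≤ m := by
      rintro m ⟨hm0, hmp⟩
      by_contra hlt
      push_neg at hlt
      obtain ⟨i, j, hij⟩ := not_exp n x hn h2 hx' m hm0 hlt
      exact hij ((key n x hn h2 hx' m hm0 i j).mp (hmp i j))
    unfold matExp
    exact le_antisymm (Nat.sInf_le hm) (hlb _ (Nat.sInf_mem ⟨_, hm⟩))
end

section
/- Let n ≥ 3 and let p_1, ..., p_r be the distinct prime factors of n. The number of irreducible but imprimitive (0,1) companion matrices of order n equals the inclusion-exclusion sum Σ_{k=1}^{r} (-1)^{k+1} Σ_{1 ≤ i_1 < ... < i_k ≤ r} 2^{n/(p_{i_1}···p_{i_k}) - 1}. -/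
/-!
A `(0,1)` companion matrix of order `n` is determined by the support `T` of its last row. Its
digraph is the path `0 → 1 → ⋯ → n - 1` together with the edges `n - 1 → j`, `j ∈ T`, each closing
a cycle of length `n - j`; it is strongly connected iff `0 ∈ T`. If a prime `p ∣ n` divides
every `j ∈ T`, then `i ↦ i mod p` increases by one along every edge, so no power of the matrix is
positive. Otherwise the cycle lengths `n - j` have gcd `1`, so closed walks at the last vertex
exist in every large length and the matrix is primitive. Hence the matrices counted are those
with `0 ∈ T ⊆ pℕ` for some prime `p ∣ n`, and inclusion–exclusion over these primes concludes:
for `d ∣ n` there are `2 ^ (n / d - 1)` sets `T` with `0 ∈ T ⊆ dℕ`.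
-/

open Matrix BigOperators

namespace Matrix

variable {ι R : Type*} [Fintype ι] [DecidableEq ι] [Semiring R] [LinearOrder R]
  [IsStrictOrderedRing R] {A : Matrix ι ι R}

theorem pow_add_apply_pos (hA : ∀ i j, 0 ≤ A i j) {a b : ℕ} {i l j : ι}
    (h₁ : 0 < (A ^ a) i l) (h₂ : 0 < (A ^ b) l j) : 0 < (A ^ (a + b)) i j := by
  rw [pow_add, mul_apply]
  exact Finset.sum_pos' (fun k _ => mul_nonneg (pow_apply_nonneg hA a i k)
    (pow_apply_nonneg hA b k j)) ⟨l, Finset.mem_univ l, mul_pos h₁ h₂⟩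

theorem pow_succ_apply_pos_of_pos (hA : ∀ i j, 0 ≤ A i j) {k : ℕ} {i l j : ι}
    (h₁ : 0 < (A ^ k) i l) (h₂ : 0 < A l j) : 0 < (A ^ (k + 1)) i j :=
  pow_add_apply_pos hA h₁ (by rwa [pow_one])

theorem exists_of_pow_succ_apply_pos (hA : ∀ i j, 0 ≤ A i j) {k : ℕ} {i j : ι}
    (h : 0 < (A ^ (k + 1)) i j) : ∃ l, 0 < (A ^ k) i l ∧ 0 < A l j := by
  rw [pow_succ, mul_apply, Finset.sum_pos_iff_of_nonneg
    (fun l _ => mul_nonneg (pow_apply_nonneg hA k i l) (hA l j))] at h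
  obtain ⟨l, -, hl⟩ := h
  exact ⟨l, pos_of_mul_pos_left hl (hA l j), pos_of_mul_pos_right hl (pow_apply_nonneg hA k i l)⟩

theorem grading_eq_add_of_pow_apply_pos {G : Type*} [AddMonoidWithOne G] (hA : ∀ i j, 0 ≤ A i j)
    (φ : ι → G) (hφ : ∀ i j, 0 < A i j → φ j = φ i + 1) :
    ∀ (m : ℕ) (i j : ι), 0 < (A ^ m) i j → φ j = φ i + m
  | 0, i, j, h => by
    rw [pow_zero, one_apply] at h
    split_ifs at h with hij
    · simp [hij]
    · exact absurd h (lt_irrefl 0)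
  | m + 1, i, j, h => by
    obtain ⟨l, hil, hlj⟩ := exists_of_pow_succ_apply_pos hA h
    rw [hφ l j hlj, grading_eq_add_of_pow_apply_pos hA φ hφ m i l hil, Nat.cast_succ, add_assoc]

end Matrix

open Matrix

theorem not_isPrimitive_of_grading {n : ℕ} {A : Matrix (Fin n) (Fin n) ℝ}
    (hA : ∀ i j, 0 ≤ A i j) {G : Type*} [AddMonoidWithOne G] (φ : Fin n → G)
    (hφ : ∀ i j, 0 < A i j → φ j = φ i + 1) {i j : Fin n} (hij : φ i ≠ φ j) :
    ¬ _root_.IsPrimitive A := by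
  rintro ⟨m, -, hm⟩
  exact hij <| (grading_eq_add_of_pow_apply_pos hA φ hφ m i i (hm i i)).trans
    (grading_eq_add_of_pow_apply_pos hA φ hφ m i j (hm i j)).symm

theorem pow_apply_self_pos_of_mem_closure {n : ℕ} {A : Matrix (Fin n) (Fin n) ℝ}
    (hA : ∀ i j, 0 ≤ A i j) {v : Fin n} {s : Set ℕ} (hs : ∀ k ∈ s, 0 < (A ^ k) v v) {k : ℕ}
    (hk : k ∈ AddSubmonoid.closure s) : 0 < (A ^ k) v v := by
  induction hk using AddSubmonoid.closure_induction with
  | mem k hk => exact hs k hk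
  | zero => simp
  | add a b _ _ ha hb => exact pow_add_apply_pos hA ha hb

theorem isPrimitive_of_setGcd_eq_one {n : ℕ} {A : Matrix (Fin n) (Fin n) ℝ}
    (hA : ∀ i j, 0 ≤ A i j) (hirr : IsIrreducibleMat A) {v : Fin n} {s : Set ℕ}
    (hs : ∀ k ∈ s, 0 < (A ^ k) v v) (hgcd : Nat.setGcd s = 1) : _root_.IsPrimitive A := by
  obtain ⟨N, hN⟩ := Nat.exists_mem_closure_of_ge s
  choose a _ ha using fun i => hirr i v
  choose b _ hb using hirr v
  -- a walk `i → v`, then a closed walk at `v` of length at least `N`, then a walk `v → j`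
  set M := N + ∑ i, a i + ∑ j, b j + 1
  refine ⟨M, by omega, fun i j => ?_⟩
  have hai : a i ≤ ∑ i, a i := Finset.single_le_sum (fun _ _ => Nat.zero_le _) (Finset.mem_univ i)
  have hbj : b j ≤ ∑ j, b j := Finset.single_le_sum (fun _ _ => Nat.zero_le _) (Finset.mem_univ j)
  have hloop : 0 < (A ^ (M - a i - b j)) v v :=
    pow_apply_self_pos_of_mem_closure hA hs (hN _ (by omega) (hgcd ▸ one_dvd _))
  have hM : a i + (M - a i - b j) + b j = M := by omega
  exact hM ▸ pow_add_apply_pos hA (pow_add_apply_pos hA (ha i) hloop) (hb j)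

/-- Row `i < n` has its one in column `i + 1` and row `n` is the indicator of `T`, so `j ∈ T`
closes the cycle `j → j + 1 → ⋯ → n → j` of length `n + 1 - j`. -/
noncomputable def companionMat {n : ℕ} (T : Finset (Fin (n + 1))) :
    Matrix (Fin (n + 1)) (Fin (n + 1)) ℝ :=
  Matrix.of fun i j =>
    if i = Fin.last n then (if j ∈ T then 1 else 0) else if (j : ℕ) = i + 1 then 1 else 0

namespace companionMat

variable {n : ℕ} {T : Finset (Fin (n + 1))}

theorem nonneg (i j : Fin (n + 1)) : 0 ≤ companionMat T i j := by
  rw [companionMat, of_apply]; split_ifs <;> simp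

theorem pos_iff {i j : Fin (n + 1)} :
    0 < companionMat T i j ↔ (i ≠ Fin.last n ∧ (j : ℕ) = i + 1) ∨ (i = Fin.last n ∧ j ∈ T) := by
  rw [companionMat, of_apply]; split_ifs <;> simp_all

theorem pow_apply_pos_of_add_eq {i j : Fin (n + 1)} :
    ∀ {d : ℕ}, (i : ℕ) + d = j → 0 < (companionMat T ^ d) i j
  | 0, h => by simp [Fin.ext (by simpa using h)]
  | d + 1, h => by
    have hj : (j : ℕ) - 1 < n + 1 := by omega
    refine pow_succ_apply_pos_of_pos nonneg (l := ⟨j - 1, hj⟩)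
      (pow_apply_pos_of_add_eq (show (i : ℕ) + d = j - 1 by omega))
      (pos_iff.mpr (Or.inl ⟨Fin.ne_last_of_lt (b := j) (show (j : ℕ) - 1 < j by omega),
        show (j : ℕ) = j - 1 + 1 by omega⟩))

theorem last_pos_of_mem {j : Fin (n + 1)} (hj : j ∈ T) : 0 < companionMat T (Fin.last n) j :=
  pos_iff.mpr (Or.inr ⟨rfl, hj⟩)

theorem isCompanion : IsCompanion (companionMat T) := by
  refine ⟨fun i j => ?_, fun i j hi => ?_⟩
  · rw [companionMat, of_apply]; split_ifs <;> simp
  · have : i ≠ Fin.last n := by rw [Ne, Fin.ext_iff, Fin.val_last]; omega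
    rw [companionMat, of_apply]; split_ifs <;> simp_all

theorem exists_eq_of_isCompanion {A : Matrix (Fin (n + 1)) (Fin (n + 1)) ℝ}
    (hA : IsCompanion A) : ∃ T, companionMat T = A := by
  refine ⟨({j | A (Fin.last n) j = 1} : Finset _), Matrix.ext fun i j => ?_⟩
  rw [companionMat, of_apply]
  split_ifs with hi hT hj
  · subst hi; exact (Finset.mem_filter.mp hT).2.symm
  · subst hi; exact ((hA.1 _ j).resolve_right fun h => hT (by simpa using h)).symm
  all_goals have hrow := hA.2 i j (Nat.succ_lt_succ (Fin.val_lt_last hi))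
  · exact (hrow.mpr hj).symm
  · exact ((hA.1 i j).resolve_right (mt hrow.mp hj)).symm

theorem injective : Function.Injective (companionMat (n := n)) := by
  intro T S h
  ext j
  have := congr_fun (congr_fun h (Fin.last n)) j
  simp only [companionMat, of_apply, if_true] at this
  split_ifs at this <;> simp_all

theorem isIrreducibleMat_iff : IsIrreducibleMat (companionMat T) ↔ 0 ∈ T := by
  constructor
  · intro h
    obtain ⟨k, hk, hpos⟩ := h 0 0
    obtain ⟨k, rfl⟩ := Nat.exists_eq_add_one_of_ne_zero hk.ne'
    obtain ⟨l, -, hl⟩ := exists_of_pow_succ_apply_pos nonneg hpos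
    rcases pos_iff.mp hl with ⟨-, h⟩ | ⟨-, h⟩
    · simp at h
    · exact h
  · intro h0 i j
    refine ⟨(n - i) + (1 + j), by omega, pow_add_apply_pos nonneg (l := Fin.last n)
      (pow_apply_pos_of_add_eq (by rw [Fin.val_last]; omega)) (pow_add_apply_pos nonneg (l := 0)
        (by rw [pow_one]; exact last_pos_of_mem h0) (pow_apply_pos_of_add_eq (by simp)))⟩

theorem pow_apply_last_last_pos {j : Fin (n + 1)} (hj : j ∈ T) :
    0 < (companionMat T ^ (n + 1 - j)) (Fin.last n) (Fin.last n) := by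
  have h : n + 1 - j = 1 + (n - j) := by omega
  rw [h]
  exact pow_add_apply_pos nonneg (by rw [pow_one]; exact last_pos_of_mem hj)
    (pow_apply_pos_of_add_eq (by rw [Fin.val_last]; omega))

theorem not_isPrimitive_iff (h0 : 0 ∈ T) :
    ¬ _root_.IsPrimitive (companionMat T) ↔ ∃ p ∈ (n + 1).primeFactors, ∀ j ∈ T, p ∣ (j : ℕ) := by
  constructor
  · intro himp
    by_contra! hT
    refine himp (isPrimitive_of_setGcd_eq_one nonneg (isIrreducibleMat_iff.mpr h0)
      (v := Fin.last n) (s := (fun j : Fin (n + 1) => n + 1 - j) '' T) ?_ ?_)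
    · rintro _ ⟨j, hj, rfl⟩
      exact pow_apply_last_last_pos hj
    · by_contra hg
      set p := (Nat.setGcd ((fun j : Fin (n + 1) => n + 1 - j) '' T)).minFac
      have hdvd : ∀ j ∈ T, p ∣ n + 1 - j := fun j hj =>
        (Nat.minFac_dvd _).trans (Nat.setGcd_dvd_of_mem ⟨j, hj, rfl⟩)
      have hpn : p ∣ n + 1 := by simpa using hdvd 0 h0
      obtain ⟨j, hj, hpj⟩ := hT p (Nat.mem_primeFactors.mpr ⟨Nat.minFac_prime hg, hpn, by omega⟩)
      exact hpj ((Nat.dvd_sub_iff_right j.isLt.le hpn).mp (hdvd j hj))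
  · rintro ⟨p, hp, hT⟩
    obtain ⟨hp, hpn, -⟩ := Nat.mem_primeFactors.mp hp
    have := Fact.mk hp
    have hn : 1 < n + 1 := hp.two_le.trans (Nat.le_of_dvd (by omega) hpn)
    refine not_isPrimitive_of_grading nonneg (fun i : Fin (n + 1) => ((i : ℕ) : ZMod p)) ?_
      (i := 0) (j := ⟨1, hn⟩) (by simp)
    intro i j hij
    rcases pos_iff.mp hij with ⟨-, h⟩ | ⟨rfl, hj⟩
    · simp [h]
    · rw [(ZMod.natCast_eq_zero_iff _ _).mpr (hT j hj), Fin.val_last, ← Nat.cast_succ,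
        (ZMod.natCast_eq_zero_iff _ _).mpr hpn]

end companionMat

open Finset

theorem Finset.card_filter_mem_powerset {α : Type*} [DecidableEq α] {s : Finset α} {a : α}
    (ha : a ∈ s) : #{t ∈ s.powerset | a ∈ t} = 2 ^ (#s - 1) := by
  rw [← card_erase_of_mem ha, ← card_powerset]
  refine card_bij' (fun t _ => t.erase a) (fun t _ => insert a t) ?_ ?_ ?_ ?_
  · intro t ht
    exact mem_powerset.mpr (erase_subset_erase a (mem_powerset.mp (mem_filter.mp ht).1))
  · intro t ht
    exact mem_filter.mpr ⟨mem_powerset.mpr (insert_subset ha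
      ((mem_powerset.mp ht).trans (erase_subset a s))), mem_insert_self a t⟩
  · intro t ht
    exact insert_erase (mem_filter.mp ht).2
  · intro t ht
    exact erase_insert fun h => notMem_erase a s (mem_powerset.mp ht h)

theorem Fin.card_filter_dvd_val {N d : ℕ} (hd : d ∣ N) : #{j : Fin N | d ∣ (j : ℕ)} = N / d := by
  rcases Nat.eq_zero_or_pos d with rfl | hd0
  · obtain rfl := zero_dvd_iff.mp hd
    simp
  obtain ⟨q, rfl⟩ := hd
  rw [Nat.mul_div_cancel_left q hd0]
  refine (card_bij' (fun (j : Fin (d * q)) _ => (j : ℕ) / d) (fun k hk => ⟨d * k, ?_⟩)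
    ?_ ?_ ?_ ?_).trans (card_range q)
  · exact Nat.mul_lt_mul_of_pos_left (mem_range.mp hk) hd0
  · intro j _
    exact mem_range.mpr (Nat.div_lt_of_lt_mul j.isLt)
  · intro k _
    simp
  · intro j hj
    exact Fin.ext (Nat.mul_div_cancel' (mem_filter.mp hj).2)
  · intro k _
    exact Nat.mul_div_cancel_left k hd0

theorem Nat.prod_dvd_iff_of_prime {t : Finset ℕ} (ht : ∀ p ∈ t, p.Prime) {m : ℕ} :
    ∏ p ∈ t, p ∣ m ↔ ∀ p ∈ t, p ∣ m :=
  ⟨fun h _ hp => (dvd_prod_of_mem _ hp).trans h,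
    prod_primes_dvd m (fun p hp => (ht p hp).prime)⟩

def dvdSupports (n d : ℕ) : Finset (Finset (Fin (n + 1))) :=
  {T | 0 ∈ T ∧ ∀ j ∈ T, d ∣ (j : ℕ)}

theorem card_dvdSupports {n d : ℕ} (hd : d ∣ n + 1) :
    #(dvdSupports n d) = 2 ^ ((n + 1) / d - 1) := by
  have h : dvdSupports n d = {T ∈ ({j | d ∣ (j : ℕ)} : Finset (Fin (n + 1))).powerset | 0 ∈ T} := by
    ext T
    simp [dvdSupports, subset_iff, and_comm]
  rw [h, card_filter_mem_powerset (by simp), Fin.card_filter_dvd_val hd]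

theorem inf'_dvdSupports {n : ℕ} {t : Finset ℕ} (ht : t.Nonempty) (hprime : ∀ p ∈ t, p.Prime) :
    t.inf' ht (dvdSupports n) = dvdSupports n (∏ p ∈ t, p) := by
  ext T
  simp only [mem_inf', dvdSupports, mem_filter, mem_univ, true_and,
    Nat.prod_dvd_iff_of_prime hprime]
  obtain ⟨p, hp⟩ := ht
  exact ⟨fun h => ⟨(h p hp).1, fun j hj q hq => (h q hq).2 j hj⟩,
    fun h q hq => ⟨h.1, fun j hj => h.2 j hj q hq⟩⟩

theorem card_biUnion_dvdSupports (n : ℕ) :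
    (#((n + 1).primeFactors.biUnion (dvdSupports n)) : ℤ) =
      ∑ S ∈ (n + 1).primeFactors.powerset.filter (· ≠ ∅),
        (-1 : ℤ) ^ (#S + 1) * 2 ^ ((n + 1) / (∏ p ∈ S, p) - 1) := by
  rw [inclusion_exclusion_card_biUnion]
  have hterm : ∀ S : (n + 1).primeFactors.powerset.filter (·.Nonempty),
      (-1 : ℤ) ^ (#S.1 + 1) * #(S.1.inf' (mem_filter.1 S.2).2 (dvdSupports n)) =
        (-1 : ℤ) ^ (#S.1 + 1) * 2 ^ ((n + 1) / (∏ p ∈ S.1, p) - 1) := by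
    rintro ⟨S, hS⟩
    obtain ⟨hSsub, hSne⟩ := mem_filter.mp hS
    have hprime p (hp : p ∈ S) : p.Prime := Nat.prime_of_mem_primeFactors (mem_powerset.mp hSsub hp)
    rw [inf'_dvdSupports hSne hprime, card_dvdSupports ((Nat.prod_dvd_iff_of_prime hprime).mpr
      fun p hp => Nat.dvd_of_mem_primeFactors (mem_powerset.mp hSsub hp))]
    push_cast
    rfl
  rw [sum_congr rfl fun S _ => hterm S, sum_coe_sort _
    (fun S => (-1 : ℤ) ^ (#S + 1) * 2 ^ ((n + 1) / (∏ p ∈ S, p) - 1))]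
  simp only [nonempty_iff_ne_empty]

theorem setOf_imprimitive_companion_eq (n : ℕ) :
    {A : Matrix (Fin (n + 1)) (Fin (n + 1)) ℝ |
        IsCompanion A ∧ IsIrreducibleMat A ∧ ¬ _root_.IsPrimitive A} =
      companionMat '' ↑((n + 1).primeFactors.biUnion (dvdSupports n)) := by
  ext A
  constructor
  · rintro ⟨hc, hirr, himp⟩
    obtain ⟨T, rfl⟩ := companionMat.exists_eq_of_isCompanion hc
    have h0 := companionMat.isIrreducibleMat_iff.mp hirr
    obtain ⟨p, hp, hT⟩ := (companionMat.not_isPrimitive_iff h0).mp himp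
    exact ⟨T, mem_biUnion.mpr ⟨p, hp, mem_filter.mpr ⟨mem_univ T, h0, hT⟩⟩, rfl⟩
  · rintro ⟨T, hT, rfl⟩
    obtain ⟨p, hp, hTp⟩ := mem_biUnion.mp hT
    obtain ⟨h0, hT⟩ := (mem_filter.mp hTp).2
    exact ⟨companionMat.isCompanion, companionMat.isIrreducibleMat_iff.mpr h0,
      (companionMat.not_isPrimitive_iff h0).mpr ⟨p, hp, hT⟩⟩

theorem stmt19_general {n : ℕ} :
    (({A : Matrix (Fin n) (Fin n) ℝ |
        IsCompanion A ∧ IsIrreducibleMat A ∧ ¬ _root_.IsPrimitive A}.ncard : ℤ)) =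
      ∑ S ∈ n.primeFactors.powerset.filter (· ≠ ∅),
        (-1 : ℤ) ^ (S.card + 1) * 2 ^ (n / (∏ p ∈ S, p) - 1) := by
  cases n with
  | zero =>
    have hprim (A : Matrix (Fin 0) (Fin 0) ℝ) : _root_.IsPrimitive A :=
      ⟨1, one_pos, fun i => i.elim0⟩
    simp [hprim, filter_singleton]
  | succ n =>
    rw [setOf_imprimitive_companion_eq, Set.ncard_image_of_injective _ companionMat.injective,
      Set.ncard_coe_finset, card_biUnion_dvdSupports]

theorem stmt19 {n : ℕ} (hn : 3 ≤ n) :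
    (({A : Matrix (Fin n) (Fin n) ℝ |
        IsCompanion A ∧ IsIrreducibleMat A ∧ ¬ _root_.IsPrimitive A}.ncard : ℤ)) =
      ∑ S ∈ n.primeFactors.powerset.filter (· ≠ ∅),
        (-1 : ℤ) ^ (S.card + 1) * 2 ^ (n / (∏ p ∈ S, p) - 1) :=
  stmt19_general
end
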